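/- Let X̃ ⊆ P^{r+1} be a smooth rational normal scroll of codimension at least 2, and set A = ⟨S(1̲)⟩, B = Join(S(1̲), X̃), U = Join(A, Δ). Then X̃ ⊆ B, A ⊆ B ∩ U, and B ∪ U ⊆ Tan(X̃). -/

import Mathlib

/-!
Common framework: projective space over an algebraically closed field, linear
subspaces, Zariski closure, tangent spaces, secant cones and secant loci,
rational normal scrolls (possibly cones) and their distinguished subvarieties.
-/

open Projectivization MvPolynomial

noncomputable section

namespace SecantLoci

/-- Projective `N`-space over `K`, with homogeneous coordinates indexed by `Fin (N+1)`. -/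
abbrev PS (K : Type*) [Field K] (N : ℕ) := Projectivization K (Fin (N + 1) → K)

variable {K : Type*} [Field K] {N : ℕ}

/-- The affine cone over a set of projective points (it contains `0`). -/
def cone (S : Set (PS K N)) : Set (Fin (N + 1) → K) :=
  { v | ∀ hv : v ≠ 0, Projectivization.mk K v hv ∈ S }

/-- The set of projective points lying in the projectivization of a linear subspace `W`. -/
def linSet (W : Submodule K (Fin (N + 1) → K)) : Set (PS K N) :=
  { x | x.submodule ≤ W }

/-- `S` is a projective linear subspace of (projective) dimension `d`. -/
def IsLinearOfDim (S : Set (PS K N)) (d : ℕ) : Prop :=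
  ∃ W : Submodule K (Fin (N + 1) → K), Module.finrank K W = d + 1 ∧ S = linSet W

/-- The projective linear span of a set of projective points. -/
def projSpan (S : Set (PS K N)) : Set (PS K N) :=
  linSet (⨆ x ∈ S, x.submodule)

/-- The line through two points (the span of the pair). -/
def lineThrough (p q : PS K N) : Set (PS K N) := projSpan {p, q}

def IsLine (S : Set (PS K N)) : Prop := IsLinearOfDim S 1

def IsPlane (S : Set (PS K N)) : Prop := IsLinearOfDim S 2

/-- The polynomials vanishing on the affine cone over `S`. -/
def vanishing (S : Set (PS K N)) : Set (MvPolynomial (Fin (N + 1)) K) :=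
  { f | ∀ v ∈ cone S, eval v f = 0 }

/-- The Zariski closure of a set of projective points. -/
def zcl (S : Set (PS K N)) : Set (PS K N) :=
  { x | ∀ f ∈ vanishing S, eval x.rep f = 0 }

def IsZClosed (S : Set (PS K N)) : Prop := zcl S = S

/-- Irreducibility with respect to Zariski closed sets. -/
def IsIrred (S : Set (PS K N)) : Prop :=
  S.Nonempty ∧ ∀ A B : Set (PS K N),
    IsZClosed A → IsZClosed B → S ⊆ A ∪ B → S ⊆ A ∨ S ⊆ B

/-- `dimGE S k` : the (Zariski) dimension of `S` is at least `k`, i.e. there is a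
strictly increasing chain of `k+1` nonempty irreducible closed subsets of the closure of `S`. -/
def dimGE (S : Set (PS K N)) (k : ℕ) : Prop :=
  ∃ c : Fin (k + 1) → Set (PS K N), StrictMono c ∧
    (∀ i, IsZClosed (c i) ∧ IsIrred (c i)) ∧ c (Fin.last k) ⊆ zcl S

/-- The embedded join of two sets: the Zariski closure of the union of all lines
joining a point of `Y` to a point of `Z` (together with `Y` and `Z` themselves). -/
def join (Y Z : Set (PS K N)) : Set (PS K N) :=
  zcl (Y ∪ Z ∪ ⋃ y ∈ Y, ⋃ z ∈ Z, lineThrough y z)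

/-- The (projective) Zariski tangent space of `X` at `q`: the projectivization of the
kernel of the linear parts at `q` of all polynomials vanishing on the cone over `X`. -/
def tangentSpace (X : Set (PS K N)) (q : PS K N) : Set (PS K N) :=
  { x | ∀ f ∈ vanishing X, ∑ i, x.rep i * eval q.rep (pderiv i f) = 0 }

/-- A line `L` is a secant line of `X` when it meets `X` in a scheme of length at least 2:
equivalently, it meets `X` in two distinct points, or it is tangent to `X` at some point. -/
def IsSecantLine (X L : Set (PS K N)) : Prop :=
  IsLine L ∧
    ((∃ x ∈ X ∩ L, ∃ y ∈ X ∩ L, x ≠ y) ∨ ∃ q ∈ X ∩ L, L ⊆ tangentSpace X q)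

/-- The secant cone `Sec_p(X)`: the union of all secant lines of `X` through `p`
(just `{p}` if there is no such line). -/
def secCone (X : Set (PS K N)) (p : PS K N) : Set (PS K N) :=
  {p} ∪ ⋃ L ∈ { L | IsSecantLine X L ∧ p ∈ L }, L

/-- The secant locus `Σ_p(X)` (as a set: the support of the scheme-theoretic
intersection of `X` with the secant cone). -/
def secLocus (X : Set (PS K N)) (p : PS K N) : Set (PS K N) :=
  X ∩ secCone X p

/-- The secant variety: the Zariski closure of the union of all chords of `X`. -/
def secVariety (X : Set (PS K N)) : Set (PS K N) :=
  zcl (⋃ x ∈ X, ⋃ y ∈ X, ⋃ _ : x ≠ y, lineThrough x y)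

/-- The tangent variety: the Zariski closure of the union of all tangent spaces of `X`. -/
def tanVariety (X : Set (PS K N)) : Set (PS K N) :=
  zcl (⋃ q ∈ X, tangentSpace X q)

/-- `S` is a smooth plane conic: the image of `ℙ¹` under a degree-2 Veronese map into
the plane spanned by three linearly independent vectors. -/
def IsSmoothConic (S : Set (PS K N)) : Prop :=
  ∃ v : Fin 3 → (Fin (N + 1) → K), LinearIndependent K v ∧
    S = { x | ∃ s t : K, (s, t) ≠ (0, 0) ∧
      x.submodule = Submodule.span K {s ^ 2 • v 0 + (s * t) • v 1 + t ^ 2 • v 2} }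

/-- `S` is a smooth quadric surface (in the 3-space spanned by four independent vectors):
the image of `ℙ¹ × ℙ¹` under a Segre map. -/
def IsSmoothQuadricSurface (S : Set (PS K N)) : Prop :=
  ∃ v : Fin 2 → Fin 2 → (Fin (N + 1) → K),
    LinearIndependent K (fun q : Fin 2 × Fin 2 => v q.1 q.2) ∧
    S = { x | ∃ b c : Fin 2 → K, b ≠ 0 ∧ c ≠ 0 ∧
      x.submodule = Submodule.span K {∑ i, ∑ j, (b i * c j) • v i j} }

/-- The data of a smooth rational normal scroll of type `(a 0, …, a (n-1))` in `ℙ^N`: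
a family of linearly independent vectors `v i j`, `0 ≤ j ≤ a i`, giving the rational
normal curve directrices of the scroll. -/
structure ScrollData (K : Type*) [Field K] (N n : ℕ) (a : Fin n → ℕ) where
  v : (i : Fin n) → Fin (a i + 1) → (Fin (N + 1) → K)
  indep : LinearIndependent K fun q : (i : Fin n) × Fin (a i + 1) => v q.1 q.2

namespace ScrollData

variable {n : ℕ} {a : Fin n → ℕ}

/-- The point of the `i`-th directrix curve over the parameter `(s : t) ∈ ℙ¹`. -/
def w (D : ScrollData K N n a) (i : Fin n) (s t : K) : Fin (N + 1) → K :=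
  ∑ j : Fin (a i + 1), (s ^ (a i - (j : ℕ)) * t ^ (j : ℕ)) • D.v i j

/-- The ruling of the scroll over the parameter `(s : t) ∈ ℙ¹`:
the linear span of the points of the directrix curves over `(s : t)`. -/
def ruling (D : ScrollData K N n a) (s t : K) : Set (PS K N) :=
  linSet (Submodule.span K (Set.range fun i => D.w i s t))

/-- The scroll itself: the union of its rulings. -/
def carrier (D : ScrollData K N n a) : Set (PS K N) :=
  ⋃ (s : K) (t : K) (_ : (s, t) ≠ (0, 0)), D.ruling s t

/-- A line section of the scroll: a line contained in the scroll meeting each ruling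
in exactly one point (a section of the scroll map `φ`). -/
def IsLineSection (D : ScrollData K N n a) (L : Set (PS K N)) : Prop :=
  IsLine L ∧ L ⊆ D.carrier ∧
    ∀ s t : K, (s, t) ≠ (0, 0) → ∃! x, x ∈ L ∩ D.ruling s t

/-- The subscroll `S(1̲)` swept out by the line sections, i.e. the subscroll
corresponding to the indices with `a i = 1`. -/
def sub1 (D : ScrollData K N n a) : Set (PS K N) :=
  ⋃ (s : K) (t : K) (_ : (s, t) ≠ (0, 0)),
    linSet (Submodule.span K
      (Set.range fun i : { i : Fin n // a i = 1 } => D.w i.1 s t))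

/-- The subscroll `S(2̲)` corresponding to the indices with `a i = 2`. -/
def sub2 (D : ScrollData K N n a) : Set (PS K N) :=
  ⋃ (s : K) (t : K) (_ : (s, t) ≠ (0, 0)),
    linSet (Submodule.span K
      (Set.range fun i : { i : Fin n // a i = 2 } => D.w i.1 s t))

/-- The Segre variety `Δ = ⋃_β ⟨C_β⟩ ≅ ℙ² × ℙ^{m-k-1}`: the union of the planes of
the conic sections `C_β` of the subscroll `S(2̲)`. -/
def delta (D : ScrollData K N n a) : Set (PS K N) :=
  ⋃ (β : { i : Fin n // a i = 2 } → K) (_ : β ≠ 0),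
    linSet (Submodule.span K (Set.range fun j : Fin 3 =>
      ∑ i : { i : Fin n // a i = 2 }, β i •
        D.v i.1 ⟨(j : ℕ), by have h1 := i.2; have h2 := j.isLt; omega⟩))

end ScrollData

/-- The data of a (possibly singular) rational normal scroll in `ℙ^N` with vertex of
projective dimension `hv - 1` (empty vertex when `hv = 0`, i.e. a smooth scroll):
a cone over the smooth rational normal scroll `base`, with vertex spanned by the
vectors `zv`, the whole configuration being linearly independent and spanning `ℙ^N`. -/
structure ConeScroll (K : Type*) [Field K] (N n : ℕ) (a : Fin n → ℕ) (hv : ℕ) where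
  zv : Fin hv → (Fin (N + 1) → K)
  base : ScrollData K N n a
  indep : LinearIndependent K
    (Sum.elim zv fun q : (i : Fin n) × Fin (a i + 1) => base.v q.1 q.2)
  total : N + 1 = hv + ∑ i, (a i + 1)

namespace ConeScroll

variable {n hv : ℕ} {a : Fin n → ℕ}

/-- The vertex `Vert(X̃)` of the cone. -/
def vertex (C : ConeScroll K N n a hv) : Set (PS K N) :=
  linSet (Submodule.span K (Set.range C.zv))

/-- The linear span `⟨X̃₀⟩` of the smooth base scroll. -/
def baseSpan (C : ConeScroll K N n a hv) : Set (PS K N) :=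
  projSpan C.base.carrier

/-- The scroll `X̃ = Join(Vert(X̃), X̃₀)` itself. -/
def carrier (C : ConeScroll K N n a hv) : Set (PS K N) :=
  join C.vertex C.base.carrier

/-- `Σ_p(X̃) = 2·Vert(X̃)`: the secant locus is (set-theoretically) the vertex,
with double structure. -/
def SLempty (C : ConeScroll K N n a hv) (p : PS K N) : Prop :=
  secLocus C.carrier p = C.vertex

/-- `Σ_p(X̃) = Join(Vert(X̃), {x, y})` for two distinct points `x, y` of `⟨X̃₀⟩`. -/
def SLpair (C : ConeScroll K N n a hv) (p : PS K N) : Prop :=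
  ∃ x y : PS K N, x ∈ C.baseSpan ∧ y ∈ C.baseSpan ∧ x ≠ y ∧
    secLocus C.carrier p = join C.vertex {x, y}

/-- `Σ_p(X̃) = 2⟨Vert(X̃), x⟩` for a point `x` of a line `L ⊆ ⟨X̃₀⟩`. -/
def SLdouble (C : ConeScroll K N n a hv) (p : PS K N) : Prop :=
  ∃ L : Set (PS K N), IsLine L ∧ L ⊆ C.baseSpan ∧ ∃ x ∈ L,
    secLocus C.carrier p = projSpan (C.vertex ∪ {x})

/-- `Σ_p(X̃) = Join(Vert(X̃), L ∪ L')` for two distinct coplanar lines `L, L' ⊆ ⟨X̃₀⟩`. -/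
def SLlines (C : ConeScroll K N n a hv) (p : PS K N) : Prop :=
  ∃ L L' : Set (PS K N), IsLine L ∧ IsLine L' ∧ L ≠ L' ∧
    (∃ Pl : Set (PS K N), IsPlane Pl ∧ L ⊆ Pl ∧ L' ⊆ Pl) ∧
    L ⊆ C.baseSpan ∧ L' ⊆ C.baseSpan ∧
    secLocus C.carrier p = join C.vertex (L ∪ L')

/-- `Σ_p(X̃) = Join(Vert(X̃), V)` for a smooth plane conic `V ⊆ ⟨X̃₀⟩`. -/
def SLconic (C : ConeScroll K N n a hv) (p : PS K N) : Prop :=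
  ∃ V : Set (PS K N), IsSmoothConic V ∧ V ⊆ C.baseSpan ∧
    secLocus C.carrier p = join C.vertex V

/-- `Σ_p(X̃) = Join(Vert(X̃), W)` for a smooth quadric surface `W ⊆ ⟨X̃₀⟩`. -/
def SLquadric (C : ConeScroll K N n a hv) (p : PS K N) : Prop :=
  ∃ W : Set (PS K N), IsSmoothQuadricSurface W ∧ W ⊆ C.baseSpan ∧
    secLocus C.carrier p = join C.vertex W

end ConeScroll

/-- The homogeneous vanishing ideal of a set of projective points. -/
def vanishingIdeal (S : Set (PS K N)) : Ideal (MvPolynomial (Fin (N + 1)) K) where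
  carrier := vanishing S
  add_mem' := by
    intro f g hf hg v hv
    simp [map_add, hf v hv, hg v hv]
  zero_mem' := by intro v hv; simp
  smul_mem' := by
    intro c f hf v hv
    simp [smul_eq_mul, hf v hv]

/-- `rs` is a regular sequence on `R/I` (expressed without passing to the quotient):
the sequence stays proper modulo `I` and each entry is a nonzerodivisor modulo
`I` together with the previous entries. -/
def IsRegModulo {R : Type*} [CommRing R] (I : Ideal R) (rs : List R) : Prop :=
  (I ⊔ Ideal.span { x | x ∈ rs } ≠ ⊤) ∧
  ∀ (i : ℕ) (h : i < rs.length) (y : R),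
    rs.get ⟨i, h⟩ * y ∈ I ⊔ Ideal.span { x | x ∈ rs.take i } →
    y ∈ I ⊔ Ideal.span { x | x ∈ rs.take i }

/-- `S ⊆ ℙ^N` is arithmetically Cohen–Macaulay: its homogeneous coordinate ring
admits a regular sequence, inside the irrelevant maximal ideal, of length equal to
its Krull dimension. -/
def IsACM (S : Set (PS K N)) : Prop :=
  ∃ rs : List (MvPolynomial (Fin (N + 1)) K),
    (∀ f ∈ rs, f ∈ Ideal.span
      (Set.range (MvPolynomial.X : Fin (N + 1) → MvPolynomial (Fin (N + 1)) K))) ∧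
    IsRegModulo (vanishingIdeal S) rs ∧
    ((rs.length : ℕ∞) : WithBot ℕ∞) =
      ringKrullDim (MvPolynomial (Fin (N + 1)) K ⧸ vanishingIdeal S)

/-- The image of a subset of `ℙ^N` under the linear projection induced by a linear
map `T` on homogeneous coordinates. -/
def projImage {M : ℕ} (T : (Fin (N + 1) → K) →ₗ[K] (Fin (M + 1) → K))
    (X : Set (PS K N)) : Set (PS K M) :=
  { y | ∃ x ∈ X, y.submodule = Submodule.map T x.submodule }

end SecantLoci

/-!
At the point `∑ cᵢ wᵢ(s, t)` of `X̃` the Zariski tangent space contains the velocity of every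
polynomial curve `ε ↦ ∑ (cᵢ + ε δᵢ) wᵢ(s + ε σ, t + ε τ)` in the cone over `X̃`. On the directrices
with `aᵢ = 1` the curve `wᵢ` is linear, so these velocities fill `⟨S(1̲)⟩` plus the ruling over
`(s : t)`. On those with `aᵢ = 2` they reach the point `∑ⱼ μⱼ vᵢⱼ` of the plane `⟨C_β⟩` as soon as
`(s : t)` is a zero of the binary quadratic form `μ₀ t² - 2 μ₁ s t + μ₂ s²`, and such a zero exists
over an algebraically closed field. So `S(1̲)`, `X̃`, `⟨S(1̲)⟩`, `Δ` and the lines joining them are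
covered by tangent spaces, and `B ∪ U ⊆ Tan(X̃)` follows on taking Zariski closures. Finally
`A ⊆ B` because `⟨S(1̲)⟩` is spanned by the two rulings of `S(1̲)` over `(1 : 0)` and `(0 : 1)`.
-/

lemma Finset.sum_subtype_eq_sum_of_eq_zero {ι M : Type*} [Fintype ι] [AddCommMonoid M]
    {p : ι → Prop} [DecidablePred p] (f : ι → M) (hf : ∀ i, ¬p i → f i = 0) :
    ∑ i : {i // p i}, f i = ∑ i, f i := by
  rw [← Fintype.sum_subtype_add_sum_subtype p f,
    Finset.sum_eq_zero fun (i : {i // ¬p i}) _ => hf i i.2, add_zero]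

section

variable {R : Type*} [CommSemiring R]

lemma MvPolynomial.polynomial_eval_aeval {σ : Type*} (γ : σ → Polynomial R)
    (f : MvPolynomial σ R) (ε : R) :
    (aeval γ f).eval ε = eval (fun i => (γ i).eval ε) f := by
  induction f using MvPolynomial.induction_on with
  | C a => simp
  | add p q hp hq => simp [hp, hq]
  | mul_X p i hp => simp [hp]

lemma MvPolynomial.polynomial_derivative_aeval {σ : Type*} [Fintype σ] (γ : σ → Polynomial R)
    (f : MvPolynomial σ R) :
    Polynomial.derivative (aeval γ f) =
      ∑ i, aeval γ (pderiv i f) * Polynomial.derivative (γ i) := by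
  classical
  induction f using MvPolynomial.induction_on with
  | C a => simp
  | add p q hp hq => simp [hp, hq, Finset.sum_add_distrib, add_mul]
  | mul_X p i hp =>
    simp only [map_mul, aeval_X, Polynomial.derivative_mul, hp, pderiv_mul, pderiv_X,
      map_add, add_mul, Finset.sum_add_distrib, Finset.sum_mul]
    refine congrArg₂ (· + ·) (Finset.sum_congr rfl fun j _ => by ring) ?_
    rw [Finset.sum_eq_single i (fun j _ hj => by simp [Pi.single_eq_of_ne hj.symm])
      (by simp)]
    simp

end

namespace SecantLoci

variable {K : Type*} [Field K] {N : ℕ}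

section Projective

variable {S T Y Z : Set (PS K N)} {x y z : PS K N}

lemma mem_linSet_iff {W : Submodule K (Fin (N + 1) → K)} : x ∈ linSet W ↔ x.rep ∈ W := by
  change x.submodule ≤ W ↔ _
  rw [Projectivization.submodule_eq, Submodule.span_singleton_le_iff_mem]

lemma mem_of_rep_mem_cone (h : x.rep ∈ cone S) : x ∈ S := by
  simpa using h x.rep_nonzero

lemma mem_cone_linSet {W : Submodule K (Fin (N + 1) → K)} {v : Fin (N + 1) → K} (hv : v ∈ W) :
    v ∈ cone (linSet W) := fun h => by
  change (Projectivization.mk K v h).submodule ≤ W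
  rwa [Projectivization.submodule_mk, Submodule.span_singleton_le_iff_mem]

lemma cone_mono (h : S ⊆ T) : cone S ⊆ cone T := fun _ hv h0 => h (hv h0)

lemma smul_rep_mem_cone (hx : x ∈ S) (r : K) : r • x.rep ∈ cone S := fun h => by
  convert hx
  conv_rhs => rw [← Projectivization.mk_rep x]
  exact (Projectivization.mk_eq_mk_iff' K _ _ h x.rep_nonzero).2 ⟨r, rfl⟩

lemma subset_projSpan : S ⊆ projSpan S := fun x hx => by
  rw [projSpan, mem_linSet_iff]
  exact Submodule.mem_iSup_of_mem x (Submodule.mem_iSup_of_mem hx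
    (by rw [Projectivization.submodule_eq]; exact Submodule.mem_span_singleton_self _))

lemma subset_zcl : S ⊆ zcl S := fun x hx _ hf =>
  hf x.rep fun h => by rwa [Projectivization.mk_rep]

lemma zcl_mono (h : S ⊆ T) : zcl S ⊆ zcl T := fun _ hx f hf =>
  hx f fun v hv => hf v (cone_mono h hv)

lemma subset_join_left : Y ⊆ join Y Z := fun _ hy =>
  subset_zcl (Or.inl (Or.inl hy))

lemma subset_join_right : Z ⊆ join Y Z := fun _ hz =>
  subset_zcl (Or.inl (Or.inr hz))

lemma join_subset_zcl (hY : Y ⊆ T) (hZ : Z ⊆ T)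
    (hYZ : ∀ y ∈ Y, ∀ z ∈ Z, lineThrough y z ⊆ T) : join Y Z ⊆ zcl T := by
  refine zcl_mono ?_
  rintro x ((hx | hx) | hx)
  · exact hY hx
  · exact hZ hx
  · simp only [Set.mem_iUnion] at hx
    obtain ⟨y, hy, z, hz, hx⟩ := hx
    exact hYZ y hy z hz hx

lemma mem_lineThrough_iff : x ∈ lineThrough y z ↔ ∃ α β : K, x.rep = α • y.rep + β • z.rep := by
  rw [lineThrough, projSpan, mem_linSet_iff, iSup_pair, Submodule.mem_sup]
  simp only [Projectivization.submodule_eq, Submodule.mem_span_singleton]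
  constructor
  · rintro ⟨_, ⟨α, rfl⟩, _, ⟨β, rfl⟩, h⟩
    exact ⟨α, β, h.symm⟩
  · rintro ⟨α, β, h⟩
    exact ⟨_, ⟨α, rfl⟩, _, ⟨β, rfl⟩, h.symm⟩

lemma mem_join_of_rep_eq_add {u v : Fin (N + 1) → K} (hu : u ∈ cone Y) (hv : v ∈ cone Z)
    (hx : x.rep = u + v) : x ∈ join Y Z := by
  by_cases hu0 : u = 0
  · exact subset_join_right (mem_of_rep_mem_cone (by rwa [hx, hu0, zero_add]))
  by_cases hv0 : v = 0
  · exact subset_join_left (mem_of_rep_mem_cone (by rwa [hx, hv0, add_zero]))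
  refine subset_zcl (Or.inr (Set.mem_biUnion (hu hu0) (Set.mem_biUnion (hv hv0) ?_)))
  obtain ⟨α, hα⟩ := Projectivization.exists_smul_eq_mk_rep K u hu0
  obtain ⟨β, hβ⟩ := Projectivization.exists_smul_eq_mk_rep K v hv0
  refine mem_lineThrough_iff.2 ⟨(α⁻¹ : Kˣ), (β⁻¹ : Kˣ), ?_⟩
  rw [← hα, ← hβ, Units.smul_def, Units.smul_def, smul_smul, smul_smul]
  simp [hx]

end Projective

section Curves

variable [Infinite K] {S : Set (PS K N)} {q x : PS K N}

theorem mem_tangentSpace_of_curve (γ : Fin (N + 1) → Polynomial K)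
    (hγ : ∀ ε, (fun k => (γ k).eval ε) ∈ cone S)
    (hq : q.rep = fun k => (γ k).eval 0)
    (hx : x.rep = fun k => (Polynomial.derivative (γ k)).eval 0) :
    x ∈ tangentSpace S q := by
  intro f hf
  have hzero : aeval γ f = 0 := Polynomial.funext fun ε => by
    rw [MvPolynomial.polynomial_eval_aeval, Polynomial.eval_zero]
    exact hf _ (hγ ε)
  have hderiv := congrArg (Polynomial.eval 0 ∘ Polynomial.derivative) hzero
  simp only [Function.comp_apply, MvPolynomial.polynomial_derivative_aeval,
    Polynomial.eval_finsetSum, Polynomial.eval_mul, MvPolynomial.polynomial_eval_aeval,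
    map_zero, Polynomial.eval_zero] at hderiv
  rw [hx, hq]
  simpa only [mul_comm] using hderiv

theorem self_mem_tangentSpace (hx : x ∈ S) : x ∈ tangentSpace S x :=
  mem_tangentSpace_of_curve (fun k => Polynomial.C (x.rep k) * (1 + Polynomial.X))
    (fun ε => by convert smul_rep_mem_cone hx (1 + ε) using 1; ext k; simp [mul_comm])
    (by ext k; simp) (by ext k; simp)

lemma subset_iUnion_tangentSpace : S ⊆ ⋃ q ∈ S, tangentSpace S q :=
  fun _ hx => Set.mem_biUnion hx (self_mem_tangentSpace hx)

end Curves

lemma exists_mul_sub_mul_eq_one {s t : K} (hst : (s, t) ≠ (0, 0)) :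
    ∃ σ τ : K, s * τ - t * σ = 1 := by
  by_cases hs : s = 0
  · have ht : t ≠ 0 := fun ht => hst (by rw [hs, ht])
    exact ⟨-t⁻¹, 0, by field_simp; ring⟩
  · exact ⟨0, s⁻¹, by field_simp; ring⟩

lemma exists_ne_zero_binary_quadratic_eq_zero [IsAlgClosed K] (μ₀ μ₁ μ₂ : K) :
    ∃ s t : K, (s, t) ≠ (0, 0) ∧ μ₀ * t ^ 2 - 2 * μ₁ * s * t + μ₂ * s ^ 2 = 0 := by
  by_cases h₀ : μ₀ = 0
  · exact ⟨0, 1, by simp, by simp [h₀]⟩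
  obtain ⟨t, ht⟩ := IsAlgClosed.exists_root
    (Polynomial.C μ₀ * Polynomial.X ^ 2 + Polynomial.C (-(2 * μ₁)) * Polynomial.X +
      Polynomial.C μ₂) (by rw [Polynomial.degree_quadratic h₀]; decide)
  refine ⟨1, t, by simp, ?_⟩
  simp only [Polynomial.IsRoot, Polynomial.eval_add, Polynomial.eval_mul, Polynomial.eval_pow,
    Polynomial.eval_C, Polynomial.eval_X] at ht
  linear_combination ht

namespace ScrollData

variable {n : ℕ} {a : Fin n → ℕ} (D : ScrollData K N n a)

def linComb : ((i : Fin n) → Fin (a i + 1) → K) →ₗ[K] (Fin (N + 1) → K) where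
  toFun φ := ∑ i, ∑ j, φ i j • D.v i j
  map_add' φ ψ := by simp [add_smul, Finset.sum_add_distrib]
  map_smul' r φ := by simp [mul_smul, Finset.smul_sum]

lemma linComb_apply (φ : (i : Fin n) → Fin (a i + 1) → K) :
    D.linComb φ = ∑ i, ∑ j, φ i j • D.v i j := rfl

lemma eq_zero_of_linComb_eq_zero {φ : (i : Fin n) → Fin (a i + 1) → K}
    (h : D.linComb φ = 0) (i : Fin n) (j : Fin (a i + 1)) : φ i j = 0 := by
  have hsigma : ∑ q : (i : Fin n) × Fin (a i + 1), φ q.1 q.2 • D.v q.1 q.2 = 0 := by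
    rw [← Finset.univ_sigma_univ, Finset.sum_sigma]
    exact h
  exact Fintype.linearIndependent_iff.mp D.indep (fun q => φ q.1 q.2) hsigma ⟨i, j⟩

def param (s t : K) : (Fin n → K) →ₗ[K] (Fin (N + 1) → K) :=
  Fintype.linearCombination K fun i => D.w i s t

lemma param_eq_linComb (s t : K) (c : Fin n → K) :
    D.param s t c = D.linComb fun i j => c i * (s ^ (a i - j) * t ^ (j : ℕ)) := by
  simp [param, Fintype.linearCombination_apply, linComb_apply, w, Finset.smul_sum, mul_smul]

lemma param_ne_zero {s t : K} (hst : (s, t) ≠ (0, 0)) {c : Fin n → K} (hc : c ≠ 0) :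
    D.param s t c ≠ 0 := by
  obtain ⟨i, hi⟩ := Function.ne_iff.1 hc
  intro h
  rw [param_eq_linComb] at h
  by_cases hs : s = 0
  · have ht : t ≠ 0 := fun ht => hst (by rw [hs, ht])
    have := D.eq_zero_of_linComb_eq_zero h i (Fin.last _)
    simp_all
  · have := D.eq_zero_of_linComb_eq_zero h i 0
    simp_all

lemma param_zero_zero (c : Fin n → K) :
    D.param 0 0 c = D.param 1 0 fun i => if a i = 0 then c i else 0 := by
  rw [param_eq_linComb, param_eq_linComb]
  congr 1
  ext i ⟨_ | j, hj⟩
  · by_cases h : a i = 0 <;> simp [h]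
  · simp

lemma mem_span_w_iff {p : Fin n → Prop} [DecidablePred p] {s t : K} {u : Fin (N + 1) → K} :
    u ∈ Submodule.span K (Set.range fun i : {i // p i} => D.w i s t) ↔
      ∃ c : Fin n → K, (∀ i, ¬p i → c i = 0) ∧ D.param s t c = u := by
  rw [Submodule.mem_span_range_iff_exists_fun]
  simp only [param, Fintype.linearCombination_apply]
  constructor
  · rintro ⟨c, rfl⟩
    refine ⟨fun i => if h : p i then c ⟨i, h⟩ else 0, fun i h => dif_neg h, ?_⟩
    rw [← Finset.sum_subtype_eq_sum_of_eq_zero (p := p)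
      (fun i => (if h : p i then c ⟨i, h⟩ else 0) • D.w i s t) fun i hi => by simp [hi]]
    exact Finset.sum_congr rfl fun i _ => by simp [i.2]
  · rintro ⟨c, hc, rfl⟩
    exact ⟨fun i => c i, Finset.sum_subtype_eq_sum_of_eq_zero (fun i => c i • D.w i s t)
      fun i hi => by simp [hc i hi]⟩

lemma ruling_subset_carrier {s t : K} (hst : (s, t) ≠ (0, 0)) : D.ruling s t ⊆ D.carrier :=
  fun _ hx => Set.mem_iUnion₂.2 ⟨s, t, Set.mem_iUnion.2 ⟨hst, hx⟩⟩

lemma param_mem_cone (s t : K) (c : Fin n → K) : D.param s t c ∈ cone D.carrier := by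
  have of_ne_zero : ∀ {s t : K}, (s, t) ≠ (0, 0) → ∀ c, D.param s t c ∈ cone D.carrier :=
    fun hst c => cone_mono (D.ruling_subset_carrier hst)
      (mem_cone_linSet (Submodule.mem_span_range_iff_exists_fun K |>.2 ⟨c, rfl⟩))
  by_cases hst : (s, t) = (0, 0)
  · obtain ⟨rfl, rfl⟩ := Prod.ext_iff.1 hst
    rw [param_zero_zero]
    exact of_ne_zero (by simp) _
  · exact of_ne_zero hst c

lemma exists_param_of_mem_carrier {x : PS K N} (hx : x ∈ D.carrier) :
    ∃ s t : K, (s, t) ≠ (0, 0) ∧ ∃ c, D.param s t c = x.rep := by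
  simp only [carrier, ruling, Set.mem_iUnion] at hx
  obtain ⟨s, t, hst, hx⟩ := hx
  exact ⟨s, t, hst, (Submodule.mem_span_range_iff_exists_fun K).1 (mem_linSet_iff.1 hx)⟩

lemma exists_param_of_mem_sub1 {x : PS K N} (hx : x ∈ D.sub1) :
    ∃ s t : K, (s, t) ≠ (0, 0) ∧
      ∃ c, (∀ i, a i ≠ 1 → c i = 0) ∧ D.param s t c = x.rep := by
  simp only [sub1, Set.mem_iUnion] at hx
  obtain ⟨s, t, hst, hx⟩ := hx
  exact ⟨s, t, hst, D.mem_span_w_iff.1 (mem_linSet_iff.1 hx)⟩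

lemma param_mem_cone_sub1 {s t : K} (hst : (s, t) ≠ (0, 0)) {c : Fin n → K}
    (hc : ∀ i, a i ≠ 1 → c i = 0) : D.param s t c ∈ cone D.sub1 :=
  cone_mono (fun _ hx => Set.mem_iUnion₂.2 ⟨s, t, Set.mem_iUnion.2 ⟨hst, hx⟩⟩)
    (mem_cone_linSet (D.mem_span_w_iff.2 ⟨c, hc, rfl⟩))

lemma sub1_subset_carrier : D.sub1 ⊆ D.carrier := fun x hx => by
  obtain ⟨s, t, -, c, -, hc⟩ := D.exists_param_of_mem_sub1 hx
  exact mem_of_rep_mem_cone (hc ▸ D.param_mem_cone s t c)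

lemma param_eq_of_support_one {c : Fin n → K} (hc : ∀ i, a i ≠ 1 → c i = 0) (s t : K) :
    D.param s t c = s • D.param 1 0 c + t • D.param 0 1 c := by
  simp only [param_eq_linComb, ← map_smul, ← map_add]
  congr 1
  ext i j
  by_cases h : a i = 1
  · obtain ⟨_ | _ | j, hj⟩ := j
    · simp [h, mul_comm]
    · simp [h, mul_comm]
    · omega
  · simp [hc i h]

lemma exists_of_mem_projSpan_sub1 {x : PS K N} (hx : x ∈ projSpan D.sub1) :
    ∃ xv yv : Fin n → K, (∀ i, a i ≠ 1 → xv i = 0) ∧ (∀ i, a i ≠ 1 → yv i = 0) ∧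
      x.rep = D.param 1 0 xv + D.param 0 1 yv := by
  have hle : ⨆ y ∈ D.sub1, y.submodule ≤
      Submodule.span K (Set.range fun i : {i // a i = 1} => D.w i 1 0) ⊔
        Submodule.span K (Set.range fun i : {i // a i = 1} => D.w i 0 1) := by
    refine iSup₂_le fun y hy => ?_
    obtain ⟨s, t, -, c, hc, hyc⟩ := D.exists_param_of_mem_sub1 hy
    rw [Projectivization.submodule_eq, Submodule.span_singleton_le_iff_mem, ← hyc,
      D.param_eq_of_support_one hc]
    have hw {s t : K} : D.param s t c ∈ Submodule.span K
        (Set.range fun i : {i // a i = 1} => D.w i s t) := D.mem_span_w_iff.2 ⟨c, hc, rfl⟩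
    exact add_mem (Submodule.mem_sup_left (Submodule.smul_mem _ _ hw))
      (Submodule.mem_sup_right (Submodule.smul_mem _ _ hw))
  obtain ⟨_, hu, _, hv, huv⟩ := Submodule.mem_sup.1 (hle (mem_linSet_iff.1 hx))
  obtain ⟨xv, hxv, rfl⟩ := D.mem_span_w_iff.1 hu
  obtain ⟨yv, hyv, rfl⟩ := D.mem_span_w_iff.1 hv
  exact ⟨xv, yv, hxv, hyv, huv.symm⟩

theorem projSpan_sub1_subset_join : projSpan D.sub1 ⊆ join D.sub1 D.carrier := fun x hx => by
  obtain ⟨xv, yv, hxv, hyv, hx⟩ := D.exists_of_mem_projSpan_sub1 hx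
  exact mem_join_of_rep_eq_add (D.param_mem_cone_sub1 (by simp) hxv)
    (cone_mono D.sub1_subset_carrier (D.param_mem_cone_sub1 (by simp) hyv)) hx

variable (a) in
/-- Coefficients of the point `∑ j, μ j • ∑ i, b i • v i j` of the plane `⟨C_b⟩ ⊆ Δ`. -/
def conicCoeff (b : Fin n → K) (μ : Fin 3 → K) : (i : Fin n) → Fin (a i + 1) → K :=
  fun i j => if h : (j : ℕ) < 3 then b i * μ ⟨j, h⟩ else 0

lemma conicCoeff_zero (μ : Fin 3 → K) : conicCoeff a 0 μ = 0 := by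
  ext i j
  simp [conicCoeff]

lemma conicCoeff_smul (r : K) (b : Fin n → K) (μ : Fin 3 → K) :
    conicCoeff a (r • b) μ = r • conicCoeff a b μ := by
  ext i j
  simp [conicCoeff, mul_assoc]

lemma exists_conicCoeff_of_mem_delta {z : PS K N} (hz : z ∈ D.delta) :
    ∃ b : Fin n → K, (∀ i, a i ≠ 2 → b i = 0) ∧ ∃ μ, z.rep = D.linComb (conicCoeff a b μ) := by
  simp only [delta, Set.mem_iUnion] at hz
  obtain ⟨β, -, hz⟩ := hz
  obtain ⟨μ, hμ⟩ := (Submodule.mem_span_range_iff_exists_fun K).1 (mem_linSet_iff.1 hz)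
  refine ⟨fun i => if h : a i = 2 then β ⟨i, h⟩ else 0, fun i h => dif_neg h, μ, ?_⟩
  rw [← hμ, linComb_apply, ← Finset.sum_subtype_eq_sum_of_eq_zero (p := fun i => a i = 2) _
    fun i hi => by simp [conicCoeff, hi]]
  simp only [Finset.smul_sum]
  rw [Finset.sum_comm]
  refine Finset.sum_congr rfl fun i _ => ?_
  rw [← Fin.sum_congr' _ (show 3 = a i + 1 by rw [i.2])]
  refine Finset.sum_congr rfl fun j _ => ?_
  simp [conicCoeff, i.2, smul_smul, mul_comm]
  rfl

/-- The velocity at `ε = 0` of the curve `ε ↦ param (s + ε σ) (t + ε τ) (c + ε δ)`. -/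
def tangentVec (s t σ τ : K) (c δ : Fin n → K) : Fin (N + 1) → K :=
  D.linComb fun i j => δ i * (s ^ (a i - j) * t ^ (j : ℕ)) +
    c i * (σ * ((a i - j : ℕ) : K) * s ^ (a i - j - 1) * t ^ (j : ℕ) +
      τ * (j : K) * s ^ (a i - j) * t ^ ((j : ℕ) - 1))

lemma tangentVec_zero (s t σ τ : K) (δ : Fin n → K) :
    D.tangentVec s t σ τ 0 δ = D.param s t δ := by
  simp [tangentVec, param_eq_linComb]

lemma tangentVec_smul {r : K} (hr : r ≠ 0) (s t σ τ : K) (c δ : Fin n → K) :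
    D.tangentVec s t (r⁻¹ * σ) (r⁻¹ * τ) (r • c) δ = D.tangentVec s t σ τ c δ := by
  simp only [tangentVec]
  congr 1
  ext i j
  field_simp
  simp
  ring

theorem tangentVec_mem_tangentSpace [Infinite K] {s t σ τ : K} {c δ : Fin n → K} {q x : PS K N}
    (hq : q.rep = D.param s t c) (hx : x.rep = D.tangentVec s t σ τ c δ) :
    x ∈ tangentSpace D.carrier q := by
  let γ : Fin (N + 1) → Polynomial K := fun k => ∑ i, ∑ j : Fin (a i + 1),
    (Polynomial.C (c i) + Polynomial.C (δ i) * Polynomial.X) *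
      ((Polynomial.C s + Polynomial.C σ * Polynomial.X) ^ (a i - j) *
        (Polynomial.C t + Polynomial.C τ * Polynomial.X) ^ (j : ℕ)) * Polynomial.C (D.v i j k)
  have heval (ε : K) :
      (fun k => (γ k).eval ε) = D.param (s + ε * σ) (t + ε * τ) (c + ε • δ) := by
    ext k
    simp [γ, param_eq_linComb, linComb_apply, Finset.sum_apply, Polynomial.eval_finsetSum,
      mul_comm _ ε]
  have hderiv : (fun k => (Polynomial.derivative (γ k)).eval 0) = D.tangentVec s t σ τ c δ := by
    ext k
    simp [γ, tangentVec, linComb_apply, Finset.sum_apply, Polynomial.eval_finsetSum,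
      Polynomial.derivative_pow]
    exact Finset.sum_congr rfl fun i _ => Finset.sum_congr rfl fun j _ => by ring
  refine mem_tangentSpace_of_curve γ (fun ε => heval ε ▸ D.param_mem_cone _ _ _) ?_
    (hx.trans hderiv.symm)
  rw [hq, heval 0]
  simp

theorem mem_tangentSpaces_of_eq_tangentVec [Infinite K] {s t σ τ : K} (hst : (s, t) ≠ (0, 0))
    {c δ : Fin n → K} {x : PS K N} (hx : x.rep = D.tangentVec s t σ τ c δ) :
    x ∈ ⋃ q ∈ D.carrier, tangentSpace D.carrier q := by
  by_cases hc : c = 0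
  · rw [hc, tangentVec_zero] at hx
    exact subset_iUnion_tangentSpace (mem_of_rep_mem_cone (hx ▸ D.param_mem_cone s t δ))
  have hq := D.param_ne_zero hst hc
  obtain ⟨r, hr⟩ := Projectivization.exists_smul_eq_mk_rep K _ hq
  have hq' : (Projectivization.mk K _ hq).rep = D.param s t ((r : K) • c) := by
    rw [← hr, Units.smul_def, map_smul]
  have hx' : x.rep = D.tangentVec s t ((r : K)⁻¹ * σ) ((r : K)⁻¹ * τ) ((r : K) • c) δ := by
    rw [tangentVec_smul _ r.ne_zero, hx]
  exact Set.mem_biUnion (D.param_mem_cone s t c hq) (D.tangentVec_mem_tangentSpace hq' hx')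

/-- The scalars multiplying `b` come from rewriting `μ₀ X² + 2 μ₁ X Y + μ₂ Y²` in the basis
`L = s X + t Y`, `M = σ X + τ Y` as `λ L² + 2 κ L M + q M²`, with `λ` the one in the second
argument, `κ` the one in the first, and `q = 0` by `hμ`. -/
lemma param_add_linComb_conicCoeff_eq_tangentVec {s t σ τ : K} (hdet : s * τ - t * σ = 1)
    {μ : Fin 3 → K} (hμ : μ 0 * t ^ 2 - 2 * μ 1 * s * t + μ 2 * s ^ 2 = 0) (δ₀ : Fin n → K)
    {xv yv b : Fin n → K} (hxv : ∀ i, a i ≠ 1 → xv i = 0) (hyv : ∀ i, a i ≠ 1 → yv i = 0)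
    (hb : ∀ i, a i ≠ 2 → b i = 0) :
    D.param s t δ₀ + (D.param 1 0 xv + D.param 0 1 yv) + D.linComb (conicCoeff a b μ) =
      D.tangentVec s t σ τ
        (s • yv - t • xv + (μ 1 * (s * τ + t * σ) - μ 0 * t * τ - μ 2 * s * σ) • b)
        (δ₀ + τ • xv - σ • yv + (μ 0 * τ ^ 2 - 2 * μ 1 * σ * τ + μ 2 * σ ^ 2) • b) := by
  simp only [param_eq_linComb, tangentVec, ← map_add]
  congr 1
  ext i j
  by_cases h1 : a i = 1
  · have hbi := hb i (by omega)
    obtain ⟨_ | _ | j, hj⟩ := j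
    · simp [h1, conicCoeff, hbi]
      linear_combination (-xv i) * hdet
    · simp [h1, conicCoeff, hbi]
      linear_combination (-yv i) * hdet
    · omega
  by_cases h2 : a i = 2
  · have hxi := hxv i (by omega)
    have hyi := hyv i (by omega)
    obtain ⟨_ | _ | _ | j, hj⟩ := j
    · simp [h2, conicCoeff, hxi, hyi]
      linear_combination (-b i * μ 0 * (s * τ - t * σ + 1)) * hdet + b i * σ ^ 2 * hμ
    · simp [h2, conicCoeff, hxi, hyi]
      linear_combination (-b i * μ 1 * (s * τ - t * σ + 1)) * hdet + b i * σ * τ * hμ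
    · simp [h2, conicCoeff, hxi, hyi]
      linear_combination (-b i * μ 2 * (s * τ - t * σ + 1)) * hdet + b i * τ ^ 2 * hμ
    · omega
  · simp [hxv i h1, hyv i h1, hb i h2, conicCoeff]

theorem mem_tangentSpaces_of_rep_eq [Infinite K] {s t : K} (hst : (s, t) ≠ (0, 0))
    {μ : Fin 3 → K} (hμ : μ 0 * t ^ 2 - 2 * μ 1 * s * t + μ 2 * s ^ 2 = 0) (δ₀ : Fin n → K)
    {xv yv b : Fin n → K} (hxv : ∀ i, a i ≠ 1 → xv i = 0) (hyv : ∀ i, a i ≠ 1 → yv i = 0)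
    (hb : ∀ i, a i ≠ 2 → b i = 0) {x : PS K N}
    (hx : x.rep =
      D.param s t δ₀ + (D.param 1 0 xv + D.param 0 1 yv) + D.linComb (conicCoeff a b μ)) :
    x ∈ ⋃ q ∈ D.carrier, tangentSpace D.carrier q := by
  obtain ⟨σ, τ, hdet⟩ := exists_mul_sub_mul_eq_one hst
  exact D.mem_tangentSpaces_of_eq_tangentVec hst
    (hx.trans (D.param_add_linComb_conicCoeff_eq_tangentVec hdet hμ δ₀ hxv hyv hb))

theorem lineThrough_subset_tangentSpaces_of_mem_sub1 [Infinite K] {y z : PS K N}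
    (hy : y ∈ D.sub1) (hz : z ∈ D.carrier) :
    lineThrough y z ⊆ ⋃ q ∈ D.carrier, tangentSpace D.carrier q := fun x hx => by
  obtain ⟨α, β, hx⟩ := mem_lineThrough_iff.1 hx
  obtain ⟨xv, yv, hxv, hyv, hy⟩ := D.exists_of_mem_projSpan_sub1 (subset_projSpan hy)
  obtain ⟨s, t, hst, d, hz⟩ := D.exists_param_of_mem_carrier hz
  refine D.mem_tangentSpaces_of_rep_eq hst (μ := 0) (by simp) (β • d) (xv := α • xv)
    (yv := α • yv) (b := 0) (fun i h => by simp [hxv i h]) (fun i h => by simp [hyv i h])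
    (fun _ _ => rfl) ?_
  rw [hx, hy, ← hz, conicCoeff_zero, map_zero, add_zero, map_smul, map_smul, map_smul, smul_add]
  abel

theorem join_sub1_carrier_subset_tanVariety [Infinite K] :
    join D.sub1 D.carrier ⊆ tanVariety D.carrier :=
  join_subset_zcl (D.sub1_subset_carrier.trans subset_iUnion_tangentSpace)
    subset_iUnion_tangentSpace fun _ hy _ hz => D.lineThrough_subset_tangentSpaces_of_mem_sub1 hy hz

theorem mem_tangentSpaces_of_rep_eq_add_conic [IsAlgClosed K] {xv yv b : Fin n → K}
    (hxv : ∀ i, a i ≠ 1 → xv i = 0) (hyv : ∀ i, a i ≠ 1 → yv i = 0)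
    (hb : ∀ i, a i ≠ 2 → b i = 0) (μ : Fin 3 → K) {x : PS K N}
    (hx : x.rep = D.param 1 0 xv + D.param 0 1 yv + D.linComb (conicCoeff a b μ)) :
    x ∈ ⋃ q ∈ D.carrier, tangentSpace D.carrier q := by
  obtain ⟨s, t, hst, hμ⟩ := exists_ne_zero_binary_quadratic_eq_zero (μ 0) (μ 1) (μ 2)
  exact D.mem_tangentSpaces_of_rep_eq hst hμ 0 hxv hyv hb (by rw [hx, map_zero, zero_add])

theorem join_projSpan_sub1_delta_subset_tanVariety [IsAlgClosed K] :
    join (projSpan D.sub1) D.delta ⊆ tanVariety D.carrier := by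
  refine join_subset_zcl (fun x hx => ?_) (fun z hz => ?_) fun y hy z hz x hx => ?_
  · obtain ⟨xv, yv, hxv, hyv, hx⟩ := D.exists_of_mem_projSpan_sub1 hx
    exact D.mem_tangentSpaces_of_rep_eq_add_conic hxv hyv (b := 0) (fun _ _ => rfl) 0
      (by rw [hx, conicCoeff_zero, map_zero, add_zero])
  · obtain ⟨b, hb, μ, hz⟩ := D.exists_conicCoeff_of_mem_delta hz
    exact D.mem_tangentSpaces_of_rep_eq_add_conic (xv := 0) (yv := 0) (fun _ _ => rfl)
      (fun _ _ => rfl) hb μ (by rw [hz, map_zero, map_zero, add_zero, zero_add])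
  · obtain ⟨α, β, hx⟩ := mem_lineThrough_iff.1 hx
    obtain ⟨xv, yv, hxv, hyv, hy⟩ := D.exists_of_mem_projSpan_sub1 hy
    obtain ⟨b, hb, μ, hz⟩ := D.exists_conicCoeff_of_mem_delta hz
    refine D.mem_tangentSpaces_of_rep_eq_add_conic (xv := α • xv) (yv := α • yv) (b := β • b)
      (fun i h => by simp [hxv i h]) (fun i h => by simp [hyv i h]) (fun i h => by simp [hb i h])
      μ ?_
    rw [hx, hy, hz, conicCoeff_smul, map_smul, map_smul, map_smul, smul_add]

end ScrollData

end SecantLoci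

namespace SecantLoci

theorem scroll_stratification_inclusions_general {K : Type*} [Field K] [IsAlgClosed K]
    {N n : ℕ} {a : Fin n → ℕ}
    (D : ScrollData K N n a) :
    D.carrier ⊆ join D.sub1 D.carrier ∧
      projSpan D.sub1 ⊆ join D.sub1 D.carrier ∩ join (projSpan D.sub1) D.delta ∧
      join D.sub1 D.carrier ∪ join (projSpan D.sub1) D.delta ⊆
        tanVariety D.carrier :=
  ⟨subset_join_right, fun _ hx => ⟨D.projSpan_sub1_subset_join hx, subset_join_left hx⟩,
    Set.union_subset D.join_sub1_carrier_subset_tanVariety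
      D.join_projSpan_sub1_delta_subset_tanVariety⟩

/-- Let `X̃ ⊆ ℙ^{r+1}` be a smooth rational normal scroll of codimension at least 2 and
set `A = ⟨S(1̲)⟩`, `B = Join(S(1̲), X̃)`, `U = Join(A, Δ)`.  Then `X̃ ⊆ B`,
`A ⊆ B ∩ U` and `B ∪ U ⊆ Tan(X̃)`. -/
theorem scroll_stratification_inclusions {K : Type*} [Field K] [IsAlgClosed K]
    {N n : ℕ} {a : Fin n → ℕ}
    (D : ScrollData K N n a) (ha : ∀ i, 1 ≤ a i)
    (htot : N + 1 = ∑ i, (a i + 1)) (hcodim : n + 2 ≤ N) :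
    D.carrier ⊆ join D.sub1 D.carrier ∧
      projSpan D.sub1 ⊆ join D.sub1 D.carrier ∩ join (projSpan D.sub1) D.delta ∧
      join D.sub1 D.carrier ∪ join (projSpan D.sub1) D.delta ⊆
        tanVariety D.carrier :=
  scroll_stratification_inclusions_general D

end SecantLoci
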